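/- For any connected graph G with chromatic number χ(G) ≥ 2, under the Ando–Lin bound s⁺ ≤ 2m(χ−1)/χ and the assumption s⁺ ≤ 2m − n + 1, the Randić index satisfies √(s⁺(G)) / R(G) ≤ 2(n−1)/n, with equality for the complete graph K_n. -/

import Mathlib

/-!
Testing the adjacency matrix against the vector `(√dᵢ)` gives `∑_{i∼j} √(dᵢdⱼ) ≤ 2mμ`, and
Cauchy–Schwarz over the ordered adjacent pairs turns this into `m ≤ μR`. As `μ ≤ √s⁺`,
`√s⁺ / R ≤ s⁺ / m ≤ (2m - n + 1) / m ≤ 2(n - 1) / n`, the last step being `2m ≤ n(n - 1)`.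
For `Kₙ` every edge contributes `1 / (n - 1)`, so `R = n / 2`, and testing against the all-ones
vector gives `n - 1 ≤ μ ≤ √s⁺`, which is the reverse inequality.
-/

open Finset SimpleGraph

/-- The adjacency matrix of a simple graph (over `ℝ`) is Hermitian. -/
theorem adjHerm {V : Type*} [Fintype V] [DecidableEq V] (G : SimpleGraph V)
    [DecidableRel G.Adj] : (G.adjMatrix ℝ).IsHermitian :=
  by rw [Matrix.IsHermitian, Matrix.conjTranspose_eq_transpose_of_trivial]; exact isSymm_adjMatrix G

open scoped Classical in
/-- The eigenvalues of the adjacency matrix of `G`. -/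
noncomputable def adjEig {V : Type*} [Fintype V] [DecidableEq V] (G : SimpleGraph V) : V → ℝ :=
  (adjHerm G).eigenvalues

/-- `s⁺(G)`: the sum of the squares of the positive adjacency eigenvalues. -/
noncomputable def sPos {V : Type*} [Fintype V] [DecidableEq V] (G : SimpleGraph V) : ℝ :=
  ∑ i, if 0 < adjEig G i then (adjEig G i) ^ 2 else 0

/-- `s⁻(G)`: the sum of the squares of the negative adjacency eigenvalues. -/
noncomputable def sNeg {V : Type*} [Fintype V] [DecidableEq V] (G : SimpleGraph V) : ℝ :=
  ∑ i, if adjEig G i < 0 then (adjEig G i) ^ 2 else 0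

/-- The spectral radius (largest adjacency eigenvalue) of `G`. -/
noncomputable def specRad {V : Type*} [Fintype V] [DecidableEq V] (G : SimpleGraph V) : ℝ :=
  ⨆ i, adjEig G i

open scoped Classical in
/-- The number of edges of `G`. -/
noncomputable def numEdges {V : Type*} [Fintype V] (G : SimpleGraph V) : ℕ :=
  G.edgeFinset.card

open scoped Classical in
/-- The Randić index `R(G) = ∑_{ij ∈ E} 1/√(dᵢ·dⱼ)`, written as half the sum
over ordered adjacent pairs. -/
noncomputable def randic {V : Type*} [Fintype V] (G : SimpleGraph V) : ℝ :=
  (1 / 2) * ∑ i, ∑ j,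
    if G.Adj i j then 1 / Real.sqrt ((G.degree i : ℝ) * (G.degree j : ℝ)) else 0

open Matrix Unitary in
theorem Matrix.IsHermitian.dotProduct_mulVec_le {n : Type*} [Fintype n] [DecidableEq n]
    {A : Matrix n n ℝ} (hA : A.IsHermitian) {c : ℝ} (hc : ∀ i, hA.eigenvalues i ≤ c)
    (x : n → ℝ) : x ⬝ᵥ (A *ᵥ x) ≤ c * (x ⬝ᵥ x) := by
  have hpsd : (c • 1 - A).PosSemidef := by
    have hconj : c • 1 - A = conjStarAlgAut ℝ _ hA.eigenvectorUnitary
        (diagonal fun i => c - hA.eigenvalues i) := by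
      conv_lhs => rw [hA.spectral_theorem]
      rw [← diagonal_sub, ← smul_one_eq_diagonal]
      simp [map_sub]
    rw [hconj]
    simpa [isUnit_coe.posSemidef_star_right_conjugate_iff, Pi.le_def] using hc
  have := hpsd.dotProduct_mulVec_nonneg x
  simp only [sub_mulVec, smul_mulVec, one_mulVec, dotProduct_sub, dotProduct_smul, star_trivial,
    smul_eq_mul] at this
  linarith

namespace SimpleGraph

variable {V : Type*} [Fintype V] (G : SimpleGraph V)

open scoped Classical

theorem two_mul_numEdges_le : 2 * (numEdges G : ℝ) ≤ Fintype.card V * (Fintype.card V - 1) := by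
  have h : (numEdges G : ℝ) ≤ (Fintype.card V).choose 2 := by
    exact_mod_cast G.card_edgeFinset_le_card_choose_two
  rw [Nat.cast_choose_two] at h
  linarith

theorem randic_nonneg : 0 ≤ randic G := by
  unfold randic
  positivity

theorem randic_bot : randic (⊥ : SimpleGraph V) = 0 := by
  simp [randic]

theorem IsRegularOfDegree.randic_eq {k : ℕ} (hG : G.IsRegularOfDegree k) (hk : k ≠ 0) :
    randic G = Fintype.card V / 2 := by
  have hrow : ∀ i, (∑ j, if G.Adj i j then 1 / √((G.degree i : ℝ) * G.degree j) else 0) = 1 := by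
    intro i
    simp_rw [hG.degree_eq, Real.sqrt_mul_self (Nat.cast_nonneg k)]
    rw [← sum_filter, ← neighborFinset_eq_filter, sum_const, card_neighborFinset_eq_degree,
      hG.degree_eq, nsmul_eq_mul]
    field_simp
  rw [randic, sum_congr rfl fun i _ => hrow i]
  simp only [sum_const, card_univ, nsmul_eq_mul, mul_one]
  ring

theorem sq_sum_degree_le_mul_randic :
    (∑ i, (G.degree i : ℝ)) ^ 2 ≤
      (∑ i, ∑ j, (if G.Adj i j then √((G.degree i : ℝ) * G.degree j) else 0)) *
        (2 * randic G) := by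
  have hcs := sum_sq_le_sum_mul_sum_of_sq_le_mul (univ : Finset (V × V))
    (r := fun p => if G.Adj p.1 p.2 then 1 else 0)
    (f := fun p => if G.Adj p.1 p.2 then √((G.degree p.1 : ℝ) * G.degree p.2) else 0)
    (g := fun p => if G.Adj p.1 p.2 then 1 / √((G.degree p.1 : ℝ) * G.degree p.2) else 0)
    (fun p _ => by positivity) (fun p _ => by positivity) fun p _ => by
      split_ifs with h
      · have hd : (0 : ℝ) < G.degree p.1 * G.degree p.2 := by
          have := h.degree_pos_left; have := h.degree_pos_right; positivity
        rw [mul_one_div_cancel (Real.sqrt_pos.mpr hd).ne', one_pow]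
      · simp
  have h2R : 2 * randic G =
      ∑ i, ∑ j, if G.Adj i j then 1 / √((G.degree i : ℝ) * G.degree j) else 0 := by
    rw [randic]; ring
  rw [h2R]
  simpa only [Fintype.sum_prod_type, ← degree_eq_sum_if_adj] using hcs

variable [DecidableEq V]

theorem sum_adj_mul_le_specRad_mul (x : V → ℝ) :
    ∑ i, ∑ j, (if G.Adj i j then x i * x j else 0) ≤ specRad G * ∑ i, x i ^ 2 := by
  have hle : ∀ i, adjEig G i ≤ specRad G := fun i => le_ciSup (Set.finite_range _).bddAbove i
  have h := (adjHerm G).dotProduct_mulVec_le hle x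
  rw [dotProduct_mulVec_adjMatrix] at h
  simpa only [dotProduct, sq] using h

theorem IsRegularOfDegree.le_specRad [Nonempty V] {k : ℕ} (hG : G.IsRegularOfDegree k) :
    (k : ℝ) ≤ specRad G := by
  have h := G.sum_adj_mul_le_specRad_mul fun _ => 1
  simp_rw [mul_one, one_pow, ← degree_eq_sum_if_adj, hG.degree_eq, sum_const, card_univ,
    nsmul_eq_mul] at h
  exact le_of_mul_le_mul_left (by linarith) (by positivity : (0 : ℝ) < Fintype.card V)

theorem sum_adj_sqrt_degree_mul_le_specRad_mul :
    ∑ i, ∑ j, (if G.Adj i j then √((G.degree i : ℝ) * G.degree j) else 0) ≤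
      specRad G * ∑ i, (G.degree i : ℝ) := by
  have h := G.sum_adj_mul_le_specRad_mul fun i => √(G.degree i : ℝ)
  simpa only [Real.sq_sqrt (Nat.cast_nonneg _), ← Real.sqrt_mul (Nat.cast_nonneg _)] using h

theorem numEdges_le_specRad_mul_randic : (numEdges G : ℝ) ≤ specRad G * randic G := by
  rcases (numEdges G).eq_zero_or_pos with hm | hm
  · obtain rfl : G = ⊥ := by simpa [numEdges] using hm
    simp [hm, randic_bot]
  have hdeg : ∑ i, (G.degree i : ℝ) = 2 * numEdges G := by
    exact_mod_cast G.sum_degrees_eq_twice_card_edges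
  have hcs := G.sq_sum_degree_le_mul_randic
  have hray := G.sum_adj_sqrt_degree_mul_le_specRad_mul
  rw [hdeg] at hcs hray
  have hm' : (0 : ℝ) < numEdges G := by exact_mod_cast hm
  nlinarith [G.randic_nonneg]

theorem specRad_le_sqrt_sPos : specRad G ≤ √(sPos G) := by
  rcases isEmpty_or_nonempty V with hV | hV
  · simp [specRad]
  obtain ⟨i, hi⟩ := exists_eq_ciSup_of_finite (f := adjEig G)
  rw [specRad, ← hi]
  rcases le_or_gt (adjEig G i) 0 with hneg | hpos
  · exact hneg.trans (Real.sqrt_nonneg _)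
  calc adjEig G i = √(if 0 < adjEig G i then adjEig G i ^ 2 else 0) := by
        rw [if_pos hpos, Real.sqrt_sq hpos.le]
    _ ≤ √(sPos G) := Real.sqrt_le_sqrt <| single_le_sum
        (f := fun j => if 0 < adjEig G j then adjEig G j ^ 2 else 0)
        (fun j _ => by positivity) (mem_univ i)

theorem sqrt_sPos_div_randic_le_of_sPos_le
    (h : sPos G ≤ 2 * (numEdges G : ℝ) - Fintype.card V + 1) :
    √(sPos G) / randic G ≤ 2 * ((Fintype.card V : ℝ) - 1) / Fintype.card V := by
  rcases (numEdges G).eq_zero_or_pos with hm | hm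
  -- Without edges `R = 0`, so the quotient is `0` by the convention `x / 0 = 0`.
  · obtain rfl : G = ⊥ := by simpa [numEdges] using hm
    rw [randic_bot, div_zero]
    rcases (Fintype.card V).eq_zero_or_pos with hV | hV
    · simp [hV]
    · have hn : (1 : ℝ) ≤ Fintype.card V := by exact_mod_cast hV
      exact div_nonneg (by linarith) (by linarith)
  have hm' : (0 : ℝ) < numEdges G := by exact_mod_cast hm
  set n : ℝ := (Fintype.card V : ℝ)
  set m : ℝ := (numEdges G : ℝ)
  have hmn : 2 * m ≤ n * (n - 1) := G.two_mul_numEdges_le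
  have hn : 0 < n := by nlinarith [(Nat.cast_nonneg _ : (0 : ℝ) ≤ n)]
  have hmR : m ≤ specRad G * randic G := G.numEdges_le_specRad_mul_randic
  have hR : 0 < randic G := G.randic_nonneg.lt_of_ne fun h0 => by
    rw [← h0, mul_zero] at hmR; linarith
  have hs : 0 ≤ sPos G := sum_nonneg fun i _ => by positivity
  calc √(sPos G) / randic G ≤ sPos G / m := by
        rw [div_le_div_iff₀ hR hm']
        calc √(sPos G) * m ≤ √(sPos G) * (specRad G * randic G) := by gcongr
          _ ≤ √(sPos G) * (√(sPos G) * randic G) := by gcongr; exact G.specRad_le_sqrt_sPos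
          _ = sPos G * randic G := by rw [← mul_assoc, Real.mul_self_sqrt hs]
    _ ≤ (2 * m - n + 1) / m := by gcongr
    _ ≤ 2 * (n - 1) / n := by
        rw [div_le_div_iff₀ hm' hn]
        nlinarith

end SimpleGraph

theorem sqrt_sPos_div_randic_le_general {n : ℕ} (G : SimpleGraph (Fin n))
    (h2 : sPos G ≤ 2 * (numEdges G : ℝ) - (n : ℝ) + 1) :
    Real.sqrt (sPos G) / randic G ≤ 2 * ((n : ℝ) - 1) / (n : ℝ) ∧
      (G = ⊤ → Real.sqrt (sPos G) / randic G = 2 * ((n : ℝ) - 1) / (n : ℝ)) := by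
  have hle : √(sPos G) / randic G ≤ 2 * ((n : ℝ) - 1) / n := by
    simpa using G.sqrt_sPos_div_randic_le_of_sPos_le (by simpa using h2)
  refine ⟨hle, ?_⟩
  rintro rfl
  rcases lt_or_ge n 2 with hn | hn
  · interval_cases n <;> simp [randic]
  have : Nonempty (Fin n) := ⟨⟨0, by omega⟩⟩
  -- `IsRegularOfDegree.top` carries the decidable adjacency of `⊤`, the lemmas above the
  -- classical one; `convert` identifies the two `LocallyFinite` instances.
  have hμ : (n : ℝ) - 1 ≤ √(sPos (⊤ : SimpleGraph (Fin n))) := by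
    have h1 : ((n - 1 : ℕ) : ℝ) ≤ specRad (⊤ : SimpleGraph (Fin n)) :=
      IsRegularOfDegree.le_specRad _ (by convert IsRegularOfDegree.top (V := Fin n); simp)
    rw [Nat.cast_sub (by omega), Nat.cast_one] at h1
    exact h1.trans (specRad_le_sqrt_sPos _)
  have hR : randic (⊤ : SimpleGraph (Fin n)) = n / 2 := by
    rw [IsRegularOfDegree.randic_eq _ (k := n - 1)
      (by convert IsRegularOfDegree.top (V := Fin n); simp) (by omega), Fintype.card_fin]
  refine le_antisymm hle ?_
  rw [hR, div_div_eq_mul_div, mul_comm]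
  gcongr

/-- for a connected graph with `χ ≥ 2`, under the Ando–Lin bound
and the assumption `s⁺ ≤ 2m - n + 1`, `√(s⁺(G))/R(G) ≤ 2(n-1)/n`, with
equality for `Kₙ`. -/
theorem sqrt_sPos_div_randic_le {n : ℕ} (G : SimpleGraph (Fin n))
    (hG : G.Connected) (χ : ℕ) (hχ : G.chromaticNumber = χ) (hχ2 : 2 ≤ χ)
    (hAL : sPos G ≤ 2 * (numEdges G : ℝ) * ((χ : ℝ) - 1) / (χ : ℝ))
    (h2 : sPos G ≤ 2 * (numEdges G : ℝ) - (n : ℝ) + 1) :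
    Real.sqrt (sPos G) / randic G ≤ 2 * ((n : ℝ) - 1) / (n : ℝ) ∧
      (G = ⊤ → Real.sqrt (sPos G) / randic G = 2 * ((n : ℝ) - 1) / (n : ℝ)) :=
  sqrt_sPos_div_randic_le_general G h2
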